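/- Let μ be a probability measure on the unit circle S¹ with arclength distance d, and let p* ∈ S¹ be a critical point of the Fréchet functional F_μ (i.e. m(μ_{p*}) = 0, where μ_{p*} is the image of μ in the normal chart centered at p*). Then the following are equivalent: (1) p* is the unique global minimizer of F_μ on S¹ (the well-defined Fréchet mean of μ); (2) for all 0 < θ < π, ∫₀^θ (λ([−π,−π+t)) − μ_{p*}([−π,−π+t))) dt > 0, and for all −π ≤ θ < 0, ∫_θ^0 (λ((π+t,π)) − μ_{p*}((π+t,π))) dt > 0, where λ is the uniform probability measure on [−π,π) (so λ([−π,−π+t)) = t/(2π)). -/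

import Mathlib

open MeasureTheory Real Set Filter

noncomputable section

/-- The unit circle `S¹` in `ℝ² ≃ ℂ`. -/
abbrev S1 := {x : ℂ // ‖x‖ = 1}

/-- The arclength distance on `S¹`. -/
def dS1 (x p : S1) : ℝ := 2 * Real.arcsin (‖(x : ℂ) - (p : ℂ)‖ / 2)

/-- The Fréchet functional of a measure `μ` on `S¹`. -/
def frechet (μ : Measure S1) (p : S1) : ℝ := (1/2) * ∫ x, (dS1 x p)^2 ∂μ

/-- The normal coordinate chart centered at `p`: `θ ↦ R_θ p`. -/
def chart (p : S1) (θ : ℝ) : S1 :=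
  ⟨Complex.exp (θ * Complex.I) * (p : ℂ), by
    rw [norm_mul, Complex.norm_exp_ofReal_mul_I, p.2, mul_one]⟩

/-- The inverse chart, with values in `[-π, π)`. -/
def invChart (p₀ : S1) (p : S1) : ℝ :=
  if Complex.arg ((p : ℂ) / (p₀ : ℂ)) = π then -π else Complex.arg ((p : ℂ) / (p₀ : ℂ))

/-- The image measure `μ_{p₀}` of `μ` in the normal chart centered at `p₀`. -/
def chartMeasure (μ : Measure S1) (p₀ : S1) : Measure ℝ := Measure.map (invChart p₀) μ

/-- `m(μ_{p₀})`, the Euclidean mean of the image measure in the chart centered at `p₀`. -/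
def mMean (μ : Measure S1) (p₀ : S1) : ℝ := ∫ t, t ∂(chartMeasure μ p₀)

/-- The antipodal point (cut locus) of `p`. -/
def antipode (p : S1) : S1 := ⟨-(p : ℂ), by rw [norm_neg]; exact p.2⟩

/-- The (left-continuous extension of the) derivative of `θ ↦ F_μ(e_{p₀}(θ))`. -/
def frechetExtDeriv (μ : Measure S1) (p₀ : S1) (θ : ℝ) : ℝ :=
  if 0 ≤ θ then θ - 2*π*(chartMeasure μ p₀ (Ico (-π) (-π+θ))).toReal - mMean μ p₀
  else θ + 2*π*(chartMeasure μ p₀ (Ico (π+θ) π)).toReal - mMean μ p₀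

def basePt : S1 := ⟨1, by norm_num⟩

/-- The (unnormalized) arclength measure on `S¹`, of total mass `2π`. -/
def arcMeasure : Measure S1 := Measure.map (chart basePt) (volume.restrict (Ico (-π) π))

/-- Property `P(p, α, φ)` for a density `f` on `S¹`. -/
def propP (f : S1 → ℝ) (p : S1) (α φ : ℝ) : Prop :=
  ∀ θ ∈ Ico (-π) π, φ ≤ |θ| → f (chart p θ) ≤ (1 - α)/(2*π)

/-!
In the chart at `p`, the squared distance from `e_p(s)` to `e_p(θ)` is `(s - θ)²`, except for the
mass beyond the cut locus of `e_p(θ)`, where folding `s - θ` back into `(-π, π]` lowers it by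
`4π` times the distance past the cut locus. Integrating against `μ_p`, whose mean vanishes at a
critical point, gives `F(e_p(θ)) - F(p) = θ²/2 - 2π 𝔼[(θ - π - s)⁺]` for `θ ≥ 0` (and the
mirror image for `θ < 0`), and by Fubini `𝔼[(θ - π - s)⁺] = ∫₀^θ μ_p([-π, -π + t)) dt`. So
`F(e_p(θ)) - F(p)` is `2π` times the comparison integral, and `p` is the unique minimiser iff
all these integrals are positive.
-/

lemma S1.coe_ne_zero (p : S1) : (p : ℂ) ≠ 0 :=
  ne_zero_of_norm_ne_zero (p.2.symm ▸ one_ne_zero)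

lemma chart_zero (p : S1) : chart p 0 = p := by
  ext; simp [chart]

lemma exp_invChart_mul_I (p q : S1) :
    Complex.exp (invChart p q * Complex.I) = q / p := by
  have hq : Complex.exp (Complex.arg (q / p) * Complex.I) = q / p := by
    simpa [norm_div, p.2, q.2] using Complex.norm_mul_exp_arg_mul_I ((q : ℂ) / p)
  unfold invChart
  split_ifs with hπ
  · rw [← hq, hπ]
    simp [Complex.exp_neg, Complex.exp_pi_mul_I]
  · exact hq

lemma chart_invChart (p q : S1) : chart p (invChart p q) = q := by
  ext
  simp [chart, exp_invChart_mul_I, div_mul_cancel₀ _ p.coe_ne_zero]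

lemma invChart_mem (p q : S1) : invChart p q ∈ Ico (-π) π := by
  unfold invChart
  split_ifs with hπ
  · exact ⟨le_rfl, by linarith [pi_pos]⟩
  · exact ⟨(Complex.neg_pi_lt_arg _).le, (Complex.arg_le_pi _).lt_of_ne hπ⟩

lemma invChart_chart (p : S1) {θ : ℝ} (hθ : θ ∈ Ico (-π) π) : invChart p (chart p θ) = θ := by
  have hdiv : (chart p θ : ℂ) / p = Complex.exp (θ * Complex.I) :=
    mul_div_cancel_right₀ _ p.coe_ne_zero
  rw [invChart, hdiv, Complex.arg_exp_mul_I]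
  rcases hθ.1.eq_or_lt with rfl | h
  · simp [toIocMod_apply_left, two_mul]
  · rw [(toIocMod_eq_self two_pi_pos).2 ⟨h, by linarith [hθ.2]⟩, if_neg hθ.2.ne]

lemma chart_injOn (p : S1) : InjOn (chart p) (Ico (-π) π) :=
  LeftInvOn.injOn fun _ hθ ↦ invChart_chart p hθ

lemma measurable_invChart (p : S1) : Measurable (invChart p) := by
  have h : Measurable fun q : S1 ↦ Complex.arg ((q : ℂ) / p) :=
    Complex.measurable_arg.comp (measurable_subtype_coe.div_const _)
  exact Measurable.ite (h (measurableSet_singleton π)) measurable_const h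

lemma dS1_eq_abs_arg (x p : S1) : dS1 x p = |Complex.arg (x / p)| := by
  set φ := Complex.arg ((x : ℂ) / p)
  have hφ : |φ / 2| ≤ π / 2 := by
    rw [abs_div, abs_two]; linarith [Complex.abs_arg_le_pi ((x : ℂ) / p)]
  have hexp : Complex.exp (φ * Complex.I) = x / p := by
    simpa [norm_div, p.2, x.2] using Complex.norm_mul_exp_arg_mul_I ((x : ℂ) / p)
  have hnorm : ‖(x : ℂ) - p‖ = 2 * |sin (φ / 2)| := by
    rw [← div_mul_cancel₀ (x : ℂ) p.coe_ne_zero, ← sub_one_mul, norm_mul, p.2, mul_one, ← hexp,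
      mul_comm, Complex.norm_exp_I_mul_ofReal_sub_one, norm_mul, Real.norm_eq_abs, abs_two,
      Real.norm_eq_abs]
  rw [dS1, hnorm, mul_div_cancel_left₀ _ two_ne_zero,
    abs_sin_eq_sin_abs_of_abs_le_pi (by linarith [pi_pos]),
    arcsin_sin' ⟨by linarith [abs_nonneg (φ / 2)], hφ⟩, abs_div, abs_two]
  ring

lemma dS1_chart_chart (p : S1) (s θ : ℝ) :
    dS1 (chart p s) (chart p θ) = |toIocMod two_pi_pos (-π) (s - θ)| := by
  have : (chart p s : ℂ) / chart p θ = Complex.exp ((s - θ : ℝ) * Complex.I) := by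
    simp only [chart, mul_div_mul_right _ _ p.coe_ne_zero, ← Complex.exp_sub]
    push_cast; ring_nf
  rw [dS1_eq_abs_arg, this, Complex.arg_exp_mul_I]

lemma toIocMod_two_pi_sq {u : ℝ} (hu : u ∈ Ioc (-3 * π) (3 * π)) :
    toIocMod two_pi_pos (-π) u ^ 2 = u ^ 2 - 4 * π * (max (-π - u) 0 + max (u - π) 0) := by
  have hπ := pi_pos
  rcases le_or_gt u (-π) with h | h
  · have : toIocMod two_pi_pos (-π) u = u + 2 * π :=
      (toIocMod_eq_iff _).2 ⟨⟨by linarith [hu.1], by linarith⟩, -1, by simp⟩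
    rw [this, max_eq_left (by linarith), max_eq_right (by linarith)]
    ring
  rcases le_or_gt u π with h' | h'
  · rw [(toIocMod_eq_self two_pi_pos).2 ⟨h, by linarith⟩, max_eq_right (by linarith),
      max_eq_right (by linarith)]
    ring
  · have : toIocMod two_pi_pos (-π) u = u - 2 * π :=
      (toIocMod_eq_iff _).2 ⟨⟨by linarith, by linarith [hu.2]⟩, 1, by simp⟩
    rw [this, max_eq_right (by linarith), max_eq_left (by linarith)]
    ring

lemma max_sub_max_sub_eq {a b s : ℝ} (hab : a ≤ b) :
    max (b - max a s) 0 = max (b - s) 0 - max (a - s) 0 := by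
  simp only [max_def]
  split_ifs <;> linarith

lemma intervalIntegral_measureReal_lt {α : Type*} [MeasurableSpace α] (μ : Measure α)
    [IsFiniteMeasure μ] {f : α → ℝ} (hf : Measurable f) {a b : ℝ} (hab : a ≤ b) :
    ∫ t in a..b, μ.real {x | f x < t} = ∫ x, (max (b - f x) 0 - max (a - f x) 0) ∂μ := by
  have : IsFiniteMeasure (volume.restrict (uIoc a b)) := isFiniteMeasure_restrict_Ioc _ _
  have hint : Integrable (Function.uncurry fun t x ↦ (Ioi (f x)).indicator (1 : ℝ → ℝ) t)
      ((volume.restrict (uIoc a b)).prod μ) :=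
    (integrable_const (1 : ℝ)).indicator (measurableSet_lt (hf.comp measurable_snd) measurable_fst)
  calc ∫ t in a..b, μ.real {x | f x < t}
      = ∫ t in a..b, ∫ x, (Ioi (f x)).indicator (1 : ℝ → ℝ) t ∂μ := by
        congr 1 with t
        exact (integral_indicator_one (measurableSet_lt hf measurable_const)).symm
    _ = ∫ x, (∫ t in a..b, (Ioi (f x)).indicator (1 : ℝ → ℝ) t) ∂μ :=
        intervalIntegral_integral_swap hint
    _ = ∫ x, (max (b - f x) 0 - max (a - f x) 0) ∂μ := by
        congr 1 with x
        rw [intervalIntegral.integral_of_le hab, integral_indicator_one measurableSet_Ioi,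
          measureReal_restrict_apply measurableSet_Ioi, inter_comm, Ioc_inter_Ioi, volume_real_Ioc,
          max_sub_max_sub_eq hab]

section Frechet

variable (μ : Measure S1) (p : S1)

lemma sq_dS1_chart {θ : ℝ} (hθ : θ ∈ Ico (-π) π) (x : S1) :
    dS1 x (chart p θ) ^ 2 = (invChart p x - θ) ^ 2
      - 4 * π * (max (θ - π - invChart p x) 0 + max (invChart p x - θ - π) 0) := by
  have hx := invChart_mem p x
  conv_lhs => rw [← chart_invChart p x]
  rw [dS1_chart_chart, sq_abs,
    toIocMod_two_pi_sq ⟨by linarith [hx.1, hθ.2, pi_pos], by linarith [hx.2, hθ.1, pi_pos]⟩,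
    show -π - (invChart p x - θ) = θ - π - invChart p x by ring]

lemma integrable_comp_invChart [IsFiniteMeasure μ] {g : ℝ → ℝ} (hg : Continuous g) :
    Integrable (fun x ↦ g (invChart p x)) μ := by
  obtain ⟨C, hC⟩ := (isCompact_Icc (a := -π) (b := π)).exists_bound_of_continuousOn hg.continuousOn
  exact .of_bound (hg.measurable.comp (measurable_invChart p)).aestronglyMeasurable C
    (ae_of_all _ fun x ↦ hC _ (Ico_subset_Icc_self (invChart_mem p x)))

lemma integrable_sq_dS1_chart [IsFiniteMeasure μ] {θ : ℝ} (hθ : θ ∈ Ico (-π) π) :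
    Integrable (fun x ↦ dS1 x (chart p θ) ^ 2) μ := by
  simp_rw [sq_dS1_chart p hθ]
  exact integrable_comp_invChart μ p
    (g := fun s ↦ (s - θ) ^ 2 - 4 * π * (max (θ - π - s) 0 + max (s - θ - π) 0)) (by fun_prop)

lemma integral_invChart : ∫ x, invChart p x ∂μ = mMean μ p :=
  (integral_map (measurable_invChart p).aemeasurable aestronglyMeasurable_id).symm

lemma frechet_chart_sub_frechet [IsProbabilityMeasure μ] {θ : ℝ} (hθ : θ ∈ Ico (-π) π) :
    frechet μ (chart p θ) - frechet μ p = θ ^ 2 / 2 - θ * mMean μ p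
      - 2 * π * (∫ x, max (θ - π - invChart p x) 0 ∂μ + ∫ x, max (invChart p x - θ - π) 0 ∂μ) := by
  have h0 : (0 : ℝ) ∈ Ico (-π) π := ⟨by linarith [pi_pos], pi_pos⟩
  have hdiff (x : S1) : dS1 x (chart p θ) ^ 2 - dS1 x (chart p 0) ^ 2
      = θ ^ 2 - 2 * θ * invChart p x
        - 4 * π * (max (θ - π - invChart p x) 0 + max (invChart p x - θ - π) 0) := by
    have hx := invChart_mem p x
    rw [sq_dS1_chart p hθ, sq_dS1_chart p h0,
      max_eq_right (show 0 - π - invChart p x ≤ 0 by linarith [hx.1]),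
      max_eq_right (show invChart p x - 0 - π ≤ 0 by linarith [hx.2])]
    ring
  have hA := integrable_comp_invChart μ p (g := fun s ↦ max (θ - π - s) 0) (by fun_prop)
  have hB := integrable_comp_invChart μ p (g := fun s ↦ max (s - θ - π) 0) (by fun_prop)
  have hφ : Integrable (fun x ↦ invChart p x) μ := integrable_comp_invChart μ p continuous_id
  have hlin : Integrable (fun x ↦ θ ^ 2 - 2 * θ * invChart p x) μ :=
    (integrable_const _).sub (hφ.const_mul _)
  have hAB : Integrable (fun x ↦ max (θ - π - invChart p x) 0 + max (invChart p x - θ - π) 0) μ :=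
    hA.add hB
  rw [← congrArg (frechet μ) (chart_zero p), frechet, frechet, ← mul_sub, ← integral_sub
    (integrable_sq_dS1_chart μ p hθ) (integrable_sq_dS1_chart μ p h0)]
  simp_rw [hdiff]
  rw [integral_sub hlin (hAB.const_mul _), integral_sub (integrable_const _) (hφ.const_mul _),
    integral_const_mul, integral_const_mul,
    integral_add hA hB, integral_const, ← integral_invChart]
  simp only [probReal_univ, smul_eq_mul, one_mul]
  ring

end Frechet

section Comparison

variable (μ : Measure S1) [IsProbabilityMeasure μ] {p : S1}

lemma frechet_chart_sub_frechet_of_nonneg (hcrit : mMean μ p = 0) {θ : ℝ} (h0 : 0 ≤ θ)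
    (hπ : θ < π) :
    frechet μ (chart p θ) - frechet μ p
      = 2 * π * ∫ t in (0 : ℝ)..θ,
          (t / (2 * π) - (chartMeasure μ p (Ico (-π) (-π + t))).toReal) := by
  have hcdf (t : ℝ) :
      (chartMeasure μ p (Ico (-π) (-π + t))).toReal = μ.real {x | invChart p x < -π + t} := by
    rw [chartMeasure, Measure.map_apply (measurable_invChart p) measurableSet_Ico, measureReal_def]
    congr 2 with x
    simp [(invChart_mem p x).1]
  have hmono : Monotone fun t ↦ μ.real {x | invChart p x < -π + t} := fun s t hst ↦
    measureReal_mono (ofPred_subset_ofPred.2 fun x hx ↦ by linarith)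
  have hcut : ∫ t in (0 : ℝ)..θ, μ.real {x | invChart p x < -π + t}
      = ∫ x, max (θ - π - invChart p x) 0 ∂μ := by
    rw [intervalIntegral.integral_comp_add_left (fun t ↦ μ.real {x | invChart p x < t}),
      intervalIntegral_measureReal_lt μ (measurable_invChart p) (by linarith)]
    congr 1 with x
    rw [max_eq_right (show -π + 0 - invChart p x ≤ 0 by linarith [(invChart_mem p x).1])]
    ring_nf
  have hnone : ∫ x, max (invChart p x - θ - π) 0 ∂μ = 0 :=
    integral_eq_zero_of_ae (ae_of_all _ fun x ↦
      max_eq_right (by linarith [(invChart_mem p x).2]))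
  simp_rw [hcdf]
  rw [intervalIntegral.integral_sub (Continuous.intervalIntegrable (by fun_prop) _ _)
      (hmono.intervalIntegrable), intervalIntegral.integral_div, integral_id, hcut,
    frechet_chart_sub_frechet μ p ⟨by linarith [pi_pos], hπ⟩, hcrit, hnone]
  field_simp
  ring

lemma frechet_chart_sub_frechet_of_neg (hcrit : mMean μ p = 0) {θ : ℝ} (hπ : -π ≤ θ)
    (h0 : θ < 0) :
    frechet μ (chart p θ) - frechet μ p
      = 2 * π * ∫ t in θ..(0 : ℝ), (-t / (2 * π) - (chartMeasure μ p (Ioo (π + t) π)).toReal) := by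
  have hcdf (t : ℝ) :
      (chartMeasure μ p (Ioo (π + t) π)).toReal = μ.real {x | -invChart p x < -π - t} := by
    rw [chartMeasure, Measure.map_apply (measurable_invChart p) measurableSet_Ioo, measureReal_def]
    congr 2 with x
    simp only [mem_preimage, mem_Ioo, mem_ofPred_eq, (invChart_mem p x).2, and_true]
    constructor <;> intro h <;> linarith
  have hanti : Antitone fun t ↦ μ.real {x | -invChart p x < -π - t} := fun s t hst ↦
    measureReal_mono (ofPred_subset_ofPred.2 fun x hx ↦ by linarith)
  have hcut : ∫ t in θ..(0 : ℝ), μ.real {x | -invChart p x < -π - t}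
      = ∫ x, max (invChart p x - θ - π) 0 ∂μ := by
    rw [intervalIntegral.integral_comp_sub_left (fun t ↦ μ.real {x | -invChart p x < t}),
      intervalIntegral_measureReal_lt μ (f := fun x ↦ -invChart p x) (measurable_invChart p).neg
        (by linarith)]
    congr 1 with x
    rw [max_eq_right (show -π - 0 - -invChart p x ≤ 0 by linarith [(invChart_mem p x).2])]
    ring_nf
  have hnone : ∫ x, max (θ - π - invChart p x) 0 ∂μ = 0 :=
    integral_eq_zero_of_ae (ae_of_all _ fun x ↦
      max_eq_right (by linarith [(invChart_mem p x).1]))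
  simp_rw [hcdf]
  rw [intervalIntegral.integral_sub (Continuous.intervalIntegrable (by fun_prop) _ _)
      (hanti.intervalIntegrable), intervalIntegral.integral_div, intervalIntegral.integral_neg,
    integral_id, hcut, frechet_chart_sub_frechet μ p ⟨hπ, by linarith [pi_pos]⟩, hcrit, hnone]
  field_simp
  ring

end Comparison

/-- Theorem `th:crit`: for a critical point `p*` of the Fréchet functional
(i.e. an exponential barycenter, `m(μ_{p*}) = 0`), `p*` is the well-defined Fréchet mean
(unique global minimizer) iff the integrated comparison with the uniform measure holds,
using `λ([-π, -π+t)) = t/(2π)` and `λ((π+t, π)) = -t/(2π)`. -/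
theorem frechet_mean_iff_uniform_comparison (μ : Measure S1) [IsProbabilityMeasure μ]
    (pstar : S1) (hcrit : mMean μ pstar = 0) :
    ((∀ q : S1, q ≠ pstar → frechet μ pstar < frechet μ q) ↔
      ((∀ θ : ℝ, 0 < θ → θ < π →
          0 < ∫ t in (0:ℝ)..θ,
            (t / (2*π) - (chartMeasure μ pstar (Ico (-π) (-π + t))).toReal)) ∧
       (∀ θ : ℝ, -π ≤ θ → θ < 0 →
          0 < ∫ t in θ..(0:ℝ),
            (-t / (2*π) - (chartMeasure μ pstar (Ioo (π + t) π)).toReal)))) := by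
  have hπ : 0 < 2 * π := two_pi_pos
  have hne {θ : ℝ} (hθ : θ ∈ Ico (-π) π) (h0 : θ ≠ 0) : chart pstar θ ≠ pstar := fun h ↦
    h0 (chart_injOn pstar hθ ⟨by linarith [pi_pos], pi_pos⟩ (h.trans (chart_zero pstar).symm))
  constructor
  · intro hmin
    refine ⟨fun θ h0 hθ ↦ ?_, fun θ hθ h0 ↦ ?_⟩
    · have := sub_pos.2 (hmin _ (hne ⟨by linarith, hθ⟩ h0.ne'))
      rw [frechet_chart_sub_frechet_of_nonneg μ hcrit h0.le hθ] at this
      exact pos_of_mul_pos_right this hπ.le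
    · have := sub_pos.2 (hmin _ (hne ⟨hθ, by linarith [pi_pos]⟩ h0.ne))
      rw [frechet_chart_sub_frechet_of_neg μ hcrit hθ h0] at this
      exact pos_of_mul_pos_right this hπ.le
  · rintro ⟨hpos, hneg⟩ q hq
    obtain ⟨hθ₁, hθ₂⟩ := invChart_mem pstar q
    rw [← sub_pos, ← chart_invChart pstar q]
    rcases lt_trichotomy (invChart pstar q) 0 with h0 | h0 | h0
    · rw [frechet_chart_sub_frechet_of_neg μ hcrit hθ₁ h0]
      exact mul_pos hπ (hneg _ hθ₁ h0)
    · exact absurd (by rw [← chart_invChart pstar q, h0, chart_zero]) hq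
    · rw [frechet_chart_sub_frechet_of_nonneg μ hcrit h0.le hθ₂]
      exact mul_pos hπ (hpos _ h0 hθ₂)
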